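/- For any set Γ of PL-formulas and any PL-formulas α, β: Kh Γ ⊨ Kh(α→β) if and only if Kh Γ ⊨ Kh α → Kh β, where Kh Γ = {Kh γ : γ ∈ Γ}. In particular (taking Γ = ∅), ⊨ Kh(α→β) iff ⊨ Kh α → Kh β. -/

import Mathlib

/-- Formulas of the propositional language `PL` over atoms `P`. -/
inductive PLForm (P : Type) : Type
  | atom : P → PLForm P
  | bot  : PLForm P
  | and  : PLForm P → PLForm P → PLForm P
  | or   : PLForm P → PLForm P → PLForm P
  | imp  : PLForm P → PLForm P → PLForm P

/-- `¬α` abbreviates `α → ⊥`. -/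
def PLForm.neg {P : Type} (α : PLForm P) : PLForm P := α.imp .bot

/-- The resolution space `S(α)`, realized as a type: `S(p)` and `S(⊥)` are
singletons, `S(α∨β)` is the disjoint union, `S(α∧β)` the product, and
`S(α→β)` the full function space. -/
def RS (P : Type) : PLForm P → Type
  | .atom _  => Unit
  | .bot     => Unit
  | .or a b  => RS P a ⊕ RS P b
  | .and a b => RS P a × RS P b
  | .imp a b => RS P a → RS P b

/-- An epistemic (information) model over atoms `P` with worlds `W`:
`W` is nonempty and `V` a valuation. -/
structure Model (P W : Type) where
  ne : Nonempty W
  V : W → Set P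

/-- The actual resolutions `R(w,α) ⊆ S(α)` at a world `w`. -/
def Res {P W : Type} (M : Model P W) (w : W) : (α : PLForm P) → Set (RS P α)
  | .atom p  => {_u : Unit | p ∈ M.V w}
  | .bot     => ∅
  | .or a b  => (Sum.inl '' Res M w a) ∪ (Sum.inr '' Res M w b)
  | .and a b => (Res M w a) ×ˢ (Res M w b)
  | .imp a b => {f : RS P a → RS P b | f '' Res M w a ⊆ Res M w b}

/-- Formulas of the dynamic epistemic language `DELKh`. -/
inductive DForm (P : Type) : Type
  | atom : P → DForm P
  | bot  : DForm P
  | and  : DForm P → DForm P → DForm P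
  | or   : DForm P → DForm P → DForm P
  | imp  : DForm P → DForm P → DForm P
  | K    : DForm P → DForm P
  | box  : DForm P → DForm P
  | kh   : PLForm P → DForm P

def DForm.neg {P : Type} (φ : DForm P) : DForm P := φ.imp .bot
def DForm.dia {P : Type} (φ : DForm P) : DForm P := (DForm.box φ.neg).neg
def DForm.biImp {P : Type} (φ ψ : DForm P) : DForm P := (φ.imp ψ).and (ψ.imp φ)

/-- Embedding of `PL` into `DELKh`. -/
def PLForm.toD {P : Type} : PLForm P → DForm P
  | .atom p  => .atom p
  | .bot     => .bot
  | .and a b => (toD a).and (toD b)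
  | .or a b  => (toD a).or (toD b)
  | .imp a b => (toD a).imp (toD b)

/-- The submodel of `M` determined by a nonempty set `s` of worlds,
with the restricted valuation. -/
def Model.restrict {P W : Type} (M : Model P W) (s : Set W) (h : s.Nonempty) :
    Model P s :=
  { ne := ⟨⟨h.choose, h.choose_spec⟩⟩, V := fun w => M.V w.1 }

/-- Satisfaction of `DELKh`-formulas at a pointed model `(M,w)`. -/
def Sat (P : Type) : (W : Type) → Model P W → W → DForm P → Prop
  | _, M, w, .atom p  => p ∈ M.V w
  | _, _, _, .bot     => False
  | W, M, w, .and a b => Sat P W M w a ∧ Sat P W M w b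
  | W, M, w, .or a b  => Sat P W M w a ∨ Sat P W M w b
  | W, M, w, .imp a b => Sat P W M w a → Sat P W M w b
  | W, M, _, .K φ     => ∀ v : W, Sat P W M v φ
  | W, M, w, .box φ   =>
      ∀ (s : Set W) (h : w ∈ s), Sat P s (M.restrict s ⟨w, h⟩) ⟨w, h⟩ φ
  | W, M, _, .kh α    => ∃ x : RS P α, ∀ v : W, x ∈ Res M v α

/-- A `DELKh`-formula is valid if it holds at every pointed model. -/
def Valid {P : Type} (φ : DForm P) : Prop :=
  ∀ (W : Type) (M : Model P W) (w : W), Sat P W M w φ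

/-- Semantic entailment from a set of `DELKh`-formulas. -/
def EntailsSet {P : Type} (Γ : Set (DForm P)) (φ : DForm P) : Prop :=
  ∀ (W : Type) (M : Model P W) (w : W),
    (∀ ψ ∈ Γ, Sat P W M w ψ) → Sat P W M w φ

/-- Classical satisfaction of `PL`-formulas at a pointed model. -/
def PLSat {P W : Type} (M : Model P W) (w : W) : PLForm P → Prop
  | .atom p  => p ∈ M.V w
  | .bot     => False
  | .and a b => PLSat M w a ∧ PLSat M w b
  | .or a b  => PLSat M w a ∨ PLSat M w b
  | .imp a b => PLSat M w a → PLSat M w b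

/-- Inquisitive support of `PL`-formulas at a state `s` of a model `M`. -/
def Support (P W : Type) (M : Model P W) : Set W → PLForm P → Prop
  | s, .atom p  => ∀ w ∈ s, p ∈ M.V w
  | s, .bot     => s = ∅
  | s, .and a b => Support P W M s a ∧ Support P W M s b
  | s, .or a b  => Support P W M s a ∨ Support P W M s b
  | s, .imp a b => ∀ t ⊆ s, Support P W M t a → Support P W M t b

/-!
A formula `Kh γ` does not depend on the world of evaluation and is preserved under passing to
submodels. Hence if `Kh Γ ∧ Kh α` forces `Kh β`, then for every resolution `x` of `α` the submodel
of the worlds where `x` resolves `α` has a uniform resolution `y` of `β`; sending each `x` to such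
a `y` is a uniform resolution of `α → β`.
-/

instance RS.instNonempty {P : Type} : (α : PLForm P) → Nonempty (RS P α)
  | .atom _ => ⟨()⟩
  | .bot => ⟨()⟩
  | .or a _ => have := RS.instNonempty a; inferInstanceAs (Nonempty (RS P a ⊕ _))
  | .and a b =>
    have := RS.instNonempty a; have := RS.instNonempty b; inferInstanceAs (Nonempty (_ × _))
  | .imp _ b => have := RS.instNonempty b; inferInstanceAs (Nonempty (_ → RS P b))

theorem res_eq_of_V_eq {P W W' : Type} {M : Model P W} {M' : Model P W'} {w : W} {w' : W'}
    (h : M.V w = M'.V w') : ∀ α : PLForm P, Res M w α = Res M' w' α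
  | .atom p => by simp [Res, h]
  | .bot => rfl
  | .or a b => by simp only [Res, res_eq_of_V_eq h a, res_eq_of_V_eq h b]
  | .and a b => by simp only [Res, res_eq_of_V_eq h a, res_eq_of_V_eq h b]; rfl
  | .imp a b => by simp only [Res, res_eq_of_V_eq h a, res_eq_of_V_eq h b]

theorem Model.res_restrict {P W : Type} (M : Model P W) {s : Set W} (hs : s.Nonempty) (v : s)
    (α : PLForm P) : Res (M.restrict s hs) v α = Res M v α :=
  res_eq_of_V_eq (M := M.restrict s hs) (M' := M) rfl α

/-- Uniform knowledge how to resolve `α` in `M`: the truth condition of `Kh α` at any world. -/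
def KnowsHow {P W : Type} (M : Model P W) (α : PLForm P) : Prop :=
  ∃ x : RS P α, ∀ v, x ∈ Res M v α

section KnowsHow

variable {P W : Type} {M : Model P W}

theorem sat_kh_image_iff {w : W} {Γ : Set (PLForm P)} :
    (∀ ψ ∈ DForm.kh '' Γ, Sat P W M w ψ) ↔ ∀ γ ∈ Γ, KnowsHow M γ :=
  Set.forall_mem_image

theorem KnowsHow.restrict {γ : PLForm P} (h : KnowsHow M γ) {s : Set W} (hs : s.Nonempty) :
    KnowsHow (M.restrict s hs) γ := by
  obtain ⟨x, hx⟩ := h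
  exact ⟨x, fun v => (M.res_restrict hs v γ).symm ▸ hx v⟩

theorem KnowsHow.mp {α β : PLForm P} (hf : KnowsHow M (α.imp β)) (hx : KnowsHow M α) :
    KnowsHow M β := by
  obtain ⟨f, hf⟩ := hf
  obtain ⟨x, hx⟩ := hx
  exact ⟨f x, fun v => hf v ⟨x, hx v, rfl⟩⟩

theorem knowsHow_imp_of_forall_exists {α β : PLForm P}
    (h : ∀ x : RS P α, ∃ y : RS P β, ∀ v, x ∈ Res M v α → y ∈ Res M v β) :
    KnowsHow M (α.imp β) := by
  choose f hf using h
  exact ⟨f, fun v => by rintro _ ⟨x, hx, rfl⟩; exact hf x v hx⟩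

theorem knowsHow_imp_of_restrict {α β : PLForm P}
    (h : ∀ (s : Set W) (hs : s.Nonempty),
      KnowsHow (M.restrict s hs) α → KnowsHow (M.restrict s hs) β) :
    KnowsHow M (α.imp β) := by
  refine knowsHow_imp_of_forall_exists fun x => ?_
  by_cases hx : ∃ v, x ∈ Res M v α
  · obtain ⟨v₀, hv₀⟩ := hx
    set s : Set W := {v | x ∈ Res M v α}
    have hs : s.Nonempty := ⟨v₀, hv₀⟩
    obtain ⟨y, hy⟩ := h s hs ⟨x, fun v => (M.res_restrict hs v α).symm ▸ v.2⟩
    exact ⟨y, fun v hv => M.res_restrict hs ⟨v, hv⟩ β ▸ hy ⟨v, hv⟩⟩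
  · exact ⟨Classical.arbitrary _, fun v hv => (hx ⟨v, hv⟩).elim⟩

end KnowsHow

theorem entailsSet_kh_imp_iff {P : Type} (Γ : Set (PLForm P)) (α β : PLForm P) :
    EntailsSet (DForm.kh '' Γ) (.kh (α.imp β)) ↔
      EntailsSet (DForm.kh '' Γ) ((DForm.kh α).imp (.kh β)) := by
  refine ⟨fun E W M w hΓ => KnowsHow.mp (E W M w hΓ), fun E W M w hΓ => ?_⟩
  refine knowsHow_imp_of_restrict fun s hs => E s (M.restrict s hs) ⟨_, hs.some_mem⟩ ?_
  exact sat_kh_image_iff.mpr fun γ hγ => (sat_kh_image_iff.mp hΓ γ hγ).restrict hs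

theorem valid_iff_entailsSet_empty {P : Type} (φ : DForm P) : Valid φ ↔ EntailsSet ∅ φ := by
  simp [Valid, EntailsSet]

theorem kh_imp_entailment_general {P : Type} (Γ : Set (PLForm P))
    (α β : PLForm P) :
    (EntailsSet (DForm.kh '' Γ) (.kh (α.imp β)) ↔
      EntailsSet (DForm.kh '' Γ) ((DForm.kh α).imp (.kh β))) ∧
    (Valid (DForm.kh (α.imp β)) ↔ Valid ((DForm.kh α).imp (.kh β))) := by
  refine ⟨entailsSet_kh_imp_iff Γ α β, ?_⟩
  simpa only [valid_iff_entailsSet_empty, Set.image_empty] using entailsSet_kh_imp_iff ∅ α β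

/-- `Kh Γ ⊨ Kh(α→β)` iff `Kh Γ ⊨ Kh α → Kh β`; in particular
(`Γ = ∅`), `⊨ Kh(α→β)` iff `⊨ Kh α → Kh β`. -/
theorem kh_imp_entailment {P : Type} [Countable P] (Γ : Set (PLForm P))
    (α β : PLForm P) :
    (EntailsSet (DForm.kh '' Γ) (.kh (α.imp β)) ↔
      EntailsSet (DForm.kh '' Γ) ((DForm.kh α).imp (.kh β))) ∧
    (Valid (DForm.kh (α.imp β)) ↔ Valid ((DForm.kh α).imp (.kh β))) :=
  kh_imp_entailment_general Γ α β
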